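/- arXiv:1410.2811 — 4 statements merged into one kernel-verified Lean document; each statement's English description precedes it below -/
import Mathlib

section
/- Let φ(z) = z/(1+z) and Z₃ = φ∂_z. For every m ≥ 1 there exist two families of smooth bounded functions (φ_{β,m})_{0≤β<m} and (φ^{β,m})_{0≤β<m} on [0,∞) such that for all smooth f, [Z₃^m, ∂_z]f = Σ_{β=0}^{m-1} φ_{β,m}(z) Z₃^β ∂_z f = Σ_{β=0}^{m-1} φ^{β,m}(z) ∂_z Z₃^β f. -/
open Real Set

/-- φ(z) = z/(1+z) -/
noncomputable def phi (z : ℝ) : ℝ := z / (1 + z)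

/-- The conormal vector field Z₃ = φ(z) ∂_z -/
noncomputable def Z3 (f : ℝ → ℝ) : ℝ → ℝ := fun z => phi z * deriv f z

open Polynomial

namespace Stmt3Aux

noncomputable def ev (p : ℝ[X]) (z : ℝ) : ℝ := p.eval (1 + z)⁻¹

noncomputable def Dp (p : ℝ[X]) : ℝ[X] := (X - 1) * X ^ 2 * derivative p

def S : Set ℝ := Ioi (-1 : ℝ)

lemma hS : IsOpen S := isOpen_Ioi

lemma one_add_pos {z : ℝ} (hz : z ∈ S) : 0 < 1 + z := by
  have := mem_Ioi.mp hz; linarith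

lemma Ici_subset : Ici (0:ℝ) ⊆ S := fun z hz => by
  simp only [S, mem_Ioi]; have := mem_Ici.mp hz; linarith

lemma contDiff_eval (p : ℝ[X]) : ContDiff ℝ (⊤ : ℕ∞) (fun x : ℝ => p.eval x) := by
  induction p using Polynomial.induction_on' with
  | add p q hp hq => simpa [Polynomial.eval_add] using hp.add hq
  | monomial n a =>
      simpa [Polynomial.eval_monomial] using (contDiff_const (c := a)).mul (contDiff_id.pow n)

lemma contDiffOn_inv_aux : ContDiffOn ℝ (⊤ : ℕ∞) (fun z : ℝ => (1 + z)⁻¹) S :=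
  (contDiffOn_const.add contDiffOn_id).inv (fun z hz => (one_add_pos hz).ne')

lemma contDiffOn_ev (p : ℝ[X]) : ContDiffOn ℝ (⊤ : ℕ∞) (ev p) S :=
  (contDiff_eval p).comp_contDiffOn contDiffOn_inv_aux

lemma hasDerivAt_ev (p : ℝ[X]) {z : ℝ} (hz : z ∈ S) :
    HasDerivAt (ev p) (ev (-(X ^ 2 * derivative p)) z) z := by
  have h0 : (1 + z) ≠ 0 := (one_add_pos hz).ne'
  have h1 : HasDerivAt (fun w : ℝ => 1 + w) 1 z := by
    simpa using (hasDerivAt_id z).const_add (1 : ℝ)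
  have h2 : HasDerivAt (fun w : ℝ => (1 + w)⁻¹) (-1 / (1 + z) ^ 2) z := h1.inv h0
  have h3 := (p.hasDerivAt ((1 + z)⁻¹)).comp z h2
  refine (h3 : HasDerivAt (ev p) _ z).congr_deriv ?_
  simp only [ev, Polynomial.eval_neg, Polynomial.eval_mul, Polynomial.eval_pow,
    Polynomial.eval_X]
  field_simp

lemma phi_eq_ev {w : ℝ} (hw : w ∈ S) : phi w = ev (1 - X) w := by
  have h0 : (1 + w) ≠ 0 := (one_add_pos hw).ne'
  simp only [phi, ev, Polynomial.eval_sub, Polynomial.eval_one, Polynomial.eval_X]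
  field_simp
  ring

lemma hasDerivAt_phi {z : ℝ} (hz : z ∈ S) :
    HasDerivAt phi (ev (X ^ 2) z) z := by
  have h := hasDerivAt_ev (1 - X) hz
  have hpq : -(X ^ 2 * derivative ((1 : ℝ[X]) - X)) = X ^ 2 := by
    simp
  rw [hpq] at h
  apply h.congr_of_eventuallyEq
  filter_upwards [hS.mem_nhds hz] with w hw
  exact phi_eq_ev hw

def G (g : ℝ → ℝ) : Prop := ContDiffOn ℝ (⊤ : ℕ∞) g S

lemma G.deriv' {g : ℝ → ℝ} (hg : G g) : G (deriv g) :=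
  ContDiffOn.deriv_of_isOpen hg hS (by simp)

lemma G.diffAt {g : ℝ → ℝ} (hg : G g) {z : ℝ} (hz : z ∈ S) :
    DifferentiableAt ℝ g z :=
  (hg.contDiffAt (hS.mem_nhds hz)).differentiableAt (by simp)

lemma contDiffOn_phi : ContDiffOn ℝ (⊤ : ℕ∞) phi S := by
  exact contDiffOn_id.div (contDiffOn_const.add contDiffOn_id)
    (fun z hz => (one_add_pos hz).ne')

lemma G.Z3' {g : ℝ → ℝ} (hg : G g) : G (Z3 g) :=
  contDiffOn_phi.mul hg.deriv'

lemma G.iter {g : ℝ → ℝ} (hg : G g) (m : ℕ) : G (Z3^[m] g) := by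
  induction m with
  | zero => simpa using hg
  | succ m ih => rw [Function.iterate_succ_apply']; exact ih.Z3'

lemma G_of {f : ℝ → ℝ} (hf : ContDiff ℝ (⊤ : ℕ∞) f) : G f := hf.contDiffOn

lemma deriv_Z3 {g : ℝ → ℝ} (hg : G g) {z : ℝ} (hz : z ∈ S) :
    deriv (Z3 g) z = Z3 (deriv g) z + ev (X ^ 2) z * deriv g z := by
  have h1 : HasDerivAt phi (ev (X ^ 2) z) z := hasDerivAt_phi hz
  have h2 : HasDerivAt (deriv g) (deriv (deriv g) z) z :=
    (hg.deriv'.diffAt hz).hasDerivAt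
  have h3 := (h1.mul h2).deriv
  have : deriv (Z3 g) z = ev (X ^ 2) z * deriv g z + phi z * deriv (deriv g) z := h3
  rw [this]
  simp only [Z3]
  ring

lemma Z3_congr {g₁ g₂ : ℝ → ℝ} (h : ∀ w ∈ S, g₁ w = g₂ w) {z : ℝ} (hz : z ∈ S) :
    Z3 g₁ z = Z3 g₂ z := by
  have hd : deriv g₁ z = deriv g₂ z := by
    apply Filter.EventuallyEq.deriv_eq
    filter_upwards [hS.mem_nhds hz] with w hw using h w hw
  simp only [Z3, hd]

lemma Z3_ev_mul (p : ℝ[X]) {g : ℝ → ℝ} (hg : G g) {z : ℝ} (hz : z ∈ S) :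
    Z3 (fun w => ev p w * g w) z = ev (Dp p) z * g z + ev p z * Z3 g z := by
  have h1 := hasDerivAt_ev p hz
  have h2 := (hg.diffAt hz).hasDerivAt
  have h3 := (h1.fun_mul h2).deriv
  simp only [Z3]
  rw [h3, phi_eq_ev hz]
  have hmul : ∀ q r : ℝ[X], ev q z * ev r z = ev (q * r) z := by
    intro q r; simp [ev]
  have : ev (1 - X) z * (ev (-(X ^ 2 * derivative p)) z * g z + ev p z * deriv g z)
      = ev ((1 - X) * -(X ^ 2 * derivative p)) z * g z
        + ev p z * (ev (1 - X) z * deriv g z) := by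
    rw [← hmul]; ring
  rw [this]
  have hDp : ((1 : ℝ[X]) - X) * -(X ^ 2 * derivative p) = Dp p := by
    simp only [Dp]; ring
  rw [hDp]

lemma Z3_sum {ι : Type*} (s : Finset ι) (F : ι → ℝ → ℝ) (hF : ∀ i ∈ s, G (F i))
    {z : ℝ} (hz : z ∈ S) :
    Z3 (fun w => ∑ i ∈ s, F i w) z = ∑ i ∈ s, Z3 (F i) z := by
  simp only [Z3]
  rw [deriv_fun_sum (fun i hi => (hF i hi).diffAt hz), Finset.mul_sum]

lemma Z3_sub {g₁ g₂ : ℝ → ℝ} (h₁ : G g₁) (h₂ : G g₂) {z : ℝ} (hz : z ∈ S) :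
    Z3 (fun w => g₁ w - g₂ w) z = Z3 g₁ z - Z3 g₂ z := by
  simp only [Z3]
  rw [deriv_fun_sub (h₁.diffAt hz) (h₂.diffAt hz), mul_sub]

/-- coefficients for the first family: AA m β = A_{β,m} -/
noncomputable def AA : ℕ → ℕ → ℝ[X]
  | 0 => fun _ => 0
  | (m + 1) => fun β =>
      Dp (AA m β) + X ^ 2 * AA m β + (if β = 0 then 0 else AA m (β - 1))
        + (if β = m then -X ^ 2 else 0)

/-- coefficients for the second family: BB m β = B_{β,m} -/
noncomputable def BB : ℕ → ℕ → ℝ[X]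
  | 0 => fun β => if β = 0 then 1 else 0
  | (m + 1) => fun β =>
      Dp (BB m β) - X ^ 2 * BB m β + (if β = 0 then 0 else BB m (β - 1))

lemma Dp_zero : Dp 0 = 0 := by simp [Dp]

lemma AA_zero : ∀ m β, m ≤ β → AA m β = 0 := by
  intro m
  induction m with
  | zero => intro β _; rfl
  | succ m ih =>
      intro β hβ
      obtain ⟨β, rfl⟩ : ∃ β', β = β' + 1 := ⟨β - 1, by omega⟩
      simp only [AA]
      rw [ih (β + 1) (by omega)]
      simp only [Nat.add_sub_cancel]
      rw [ih β (by omega)]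
      have : β + 1 ≠ m := by omega
      simp [Dp_zero, this]

lemma BB_zero : ∀ m β, m < β → BB m β = 0 := by
  intro m
  induction m with
  | zero =>
      intro β hβ
      obtain ⟨β, rfl⟩ : ∃ β', β = β' + 1 := ⟨β - 1, by omega⟩
      simp [BB]
  | succ m ih =>
      intro β hβ
      obtain ⟨β, rfl⟩ : ∃ β', β = β' + 1 := ⟨β - 1, by omega⟩
      simp only [BB]
      rw [ih (β + 1) (by omega)]
      simp only [Nat.add_sub_cancel]
      rw [ih β (by omega)]
      simp [Dp_zero]

lemma BB_diag : ∀ m, BB m m = 1 := by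
  intro m
  induction m with
  | zero => rfl
  | succ m ih =>
      simp only [BB]
      rw [BB_zero m (m + 1) (by omega)]
      simp [Dp_zero, ih]

section Main

variable {f : ℝ → ℝ} (hf : ContDiff ℝ (⊤ : ℕ∞) f)

lemma mainA (hf : ContDiff ℝ (⊤ : ℕ∞) f) :
    ∀ m, ∀ z ∈ S, Z3^[m] (deriv f) z - deriv (Z3^[m] f) z
      = ∑ β ∈ Finset.range m, ev (AA m β) z * Z3^[β] (deriv f) z := by
  have Gf : G f := G_of hf
  have Gdf : G (deriv f) := Gf.deriv'
  intro m
  induction m with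
  | zero => intro z hz; simp
  | succ m ih =>
      intro z hz
      -- abbreviations
      have Gm : G (Z3^[m] f) := Gf.iter m
      have GT : ∀ β, G (Z3^[β] (deriv f)) := fun β => Gdf.iter β
      have Gsum : G (fun w => ∑ β ∈ Finset.range m, ev (AA m β) w * Z3^[β] (deriv f) w) :=
        ContDiffOn.sum (fun β _ => (contDiffOn_ev (AA m β)).mul (GT β))
      -- derivative of Z3^[m] f agrees on S with the expression from ih
      have hda : ∀ w ∈ S, deriv (Z3^[m] f) w
          = Z3^[m] (deriv f) w
            - ∑ β ∈ Finset.range m, ev (AA m β) w * Z3^[β] (deriv f) w := by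
        intro w hw
        have := ih w hw
        linarith
      rw [Function.iterate_succ_apply', Function.iterate_succ_apply']
      rw [deriv_Z3 Gm hz]
      have step1 : Z3 (deriv (Z3^[m] f)) z
          = Z3 (Z3^[m] (deriv f)) z
            - Z3 (fun w => ∑ β ∈ Finset.range m, ev (AA m β) w * Z3^[β] (deriv f) w) z := by
        rw [Z3_congr hda hz]
        exact Z3_sub (Gdf.iter m) Gsum hz
      have step2 : Z3 (fun w => ∑ β ∈ Finset.range m, ev (AA m β) w * Z3^[β] (deriv f) w) z
          = ∑ β ∈ Finset.range m,
              (ev (Dp (AA m β)) z * Z3^[β] (deriv f) z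
                + ev (AA m β) z * Z3^[β + 1] (deriv f) z) := by
        rw [Z3_sum _ _ (fun β _ => (contDiffOn_ev (AA m β)).mul (GT β)) hz]
        refine Finset.sum_congr rfl (fun β _ => ?_)
        rw [Z3_ev_mul (AA m β) (GT β) hz, Function.iterate_succ_apply']
      rw [step1, hda z hz]
      -- now pure algebra with sums
      rw [step2]
      -- target sum
      have expand : ∑ β ∈ Finset.range (m + 1), ev (AA (m + 1) β) z * Z3^[β] (deriv f) z
          = (∑ β ∈ Finset.range (m + 1),
              (ev (Dp (AA m β)) z + ev (X ^ 2) z * ev (AA m β) z) * Z3^[β] (deriv f) z)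
            + (∑ β ∈ Finset.range (m + 1),
              ev (if β = 0 then 0 else AA m (β - 1)) z * Z3^[β] (deriv f) z)
            + (∑ β ∈ Finset.range (m + 1),
              ev (if β = m then -X ^ 2 else 0) z * Z3^[β] (deriv f) z) := by
        rw [← Finset.sum_add_distrib, ← Finset.sum_add_distrib]
        refine Finset.sum_congr rfl (fun β _ => ?_)
        show ev (Dp (AA m β) + X ^ 2 * AA m β + _ + _) z * _ = _
        simp only [ev, Polynomial.eval_add, Polynomial.eval_mul, Polynomial.eval_pow,
          Polynomial.eval_X]
        ring
      rw [expand]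
      have e1 : ∑ β ∈ Finset.range (m + 1),
            (ev (Dp (AA m β)) z + ev (X ^ 2) z * ev (AA m β) z) * Z3^[β] (deriv f) z
          = ∑ β ∈ Finset.range m,
            (ev (Dp (AA m β)) z + ev (X ^ 2) z * ev (AA m β) z) * Z3^[β] (deriv f) z := by
        rw [Finset.sum_range_succ]
        rw [AA_zero m m le_rfl]
        simp [ev, Dp_zero]
      have e2 : ∑ β ∈ Finset.range (m + 1),
            ev (if β = 0 then 0 else AA m (β - 1)) z * Z3^[β] (deriv f) z
          = ∑ β ∈ Finset.range m, ev (AA m β) z * Z3^[β + 1] (deriv f) z := by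
        rw [Finset.sum_range_succ']
        simp [ev]
      have e3 : ∑ β ∈ Finset.range (m + 1),
            ev (if β = m then -X ^ 2 else 0) z * Z3^[β] (deriv f) z
          = - (ev (X ^ 2) z * Z3^[m] (deriv f) z) := by
        rw [Finset.sum_range_succ]
        have : ∀ β ∈ Finset.range m, ev (if β = m then -X ^ 2 else 0) z * Z3^[β] (deriv f) z = 0 := by
          intro β hβ
          have : β ≠ m := (Finset.mem_range.mp hβ).ne
          simp [this, ev]
        rw [Finset.sum_eq_zero this]
        simp [ev]
      rw [e1, e2, e3]
      have e7 : ∑ β ∈ Finset.range m,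
            (ev (Dp (AA m β)) z + ev (X ^ 2) z * ev (AA m β) z) * Z3^[β] (deriv f) z
          = (∑ β ∈ Finset.range m, ev (Dp (AA m β)) z * Z3^[β] (deriv f) z)
            + ∑ β ∈ Finset.range m, ev (X ^ 2) z * (ev (AA m β) z * Z3^[β] (deriv f) z) := by
        rw [← Finset.sum_add_distrib]
        exact Finset.sum_congr rfl fun β _ => by ring
      rw [e7, ← Finset.mul_sum, Finset.sum_add_distrib]
      ring

lemma mainB (hf : ContDiff ℝ (⊤ : ℕ∞) f) :
    ∀ m, ∀ z ∈ S, Z3^[m] (deriv f) z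
      = ∑ β ∈ Finset.range (m + 1), ev (BB m β) z * deriv (Z3^[β] f) z := by
  have Gf : G f := G_of hf
  intro m
  induction m with
  | zero =>
      intro z hz
      simp [BB, ev]
  | succ m ih =>
      intro z hz
      have GT : ∀ β, G (deriv (Z3^[β] f)) := fun β => (Gf.iter β).deriv'
      rw [Function.iterate_succ_apply']
      rw [Z3_congr (g₂ := fun w => ∑ β ∈ Finset.range (m + 1),
        ev (BB m β) w * deriv (Z3^[β] f) w) ih hz]
      rw [Z3_sum _ _ (fun β _ => (contDiffOn_ev (BB m β)).mul (GT β)) hz]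
      have step : ∀ β, Z3 (fun w => ev (BB m β) w * deriv (Z3^[β] f) w) z
          = ev (Dp (BB m β) - X ^ 2 * BB m β) z * deriv (Z3^[β] f) z
            + ev (BB m β) z * deriv (Z3^[β + 1] f) z := by
        intro β
        rw [Z3_ev_mul (BB m β) (GT β) hz]
        have h := deriv_Z3 (Gf.iter β) hz
        have h2 : Z3 (deriv (Z3^[β] f)) z
            = deriv (Z3^[β + 1] f) z - ev (X ^ 2) z * deriv (Z3^[β] f) z := by
          rw [Function.iterate_succ_apply']; linarith
        rw [h2]
        simp only [ev, Polynomial.eval_sub, Polynomial.eval_mul, Polynomial.eval_pow,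
          Polynomial.eval_X]
        ring
      rw [Finset.sum_congr rfl fun β _ => step β]
      rw [Finset.sum_add_distrib]
      have expand : ∑ β ∈ Finset.range (m + 1 + 1), ev (BB (m + 1) β) z * deriv (Z3^[β] f) z
          = (∑ β ∈ Finset.range (m + 1 + 1),
              ev (Dp (BB m β) - X ^ 2 * BB m β) z * deriv (Z3^[β] f) z)
            + ∑ β ∈ Finset.range (m + 1 + 1),
              ev (if β = 0 then 0 else BB m (β - 1)) z * deriv (Z3^[β] f) z := by
        rw [← Finset.sum_add_distrib]
        refine Finset.sum_congr rfl fun β _ => ?_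
        show ev (Dp (BB m β) - X ^ 2 * BB m β + _) z * _ = _
        simp only [ev, Polynomial.eval_add, Polynomial.eval_sub, Polynomial.eval_mul]
        ring
      have t1 : ∑ β ∈ Finset.range (m + 1 + 1),
            ev (Dp (BB m β) - X ^ 2 * BB m β) z * deriv (Z3^[β] f) z
          = ∑ β ∈ Finset.range (m + 1),
            ev (Dp (BB m β) - X ^ 2 * BB m β) z * deriv (Z3^[β] f) z := by
        rw [Finset.sum_range_succ, BB_zero m (m + 1) (by omega)]
        simp [ev, Dp_zero]
      have t2 : ∑ β ∈ Finset.range (m + 1 + 1),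
            ev (if β = 0 then 0 else BB m (β - 1)) z * deriv (Z3^[β] f) z
          = ∑ β ∈ Finset.range (m + 1), ev (BB m β) z * deriv (Z3^[β + 1] f) z := by
        rw [Finset.sum_range_succ']
        simp [ev]
      rw [expand, t1, t2]

end Main

lemma ev_bound (p : ℝ[X]) : ∃ C : ℝ, ∀ z ∈ Ici (0:ℝ), |ev p z| ≤ C := by
  refine ⟨∑ i ∈ Finset.range (p.natDegree + 1), |p.coeff i|, fun z hz => ?_⟩
  have hz0 : (0:ℝ) ≤ z := hz
  have h1 : (0:ℝ) < 1 + z := by linarith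
  have hu0 : (0:ℝ) ≤ (1 + z)⁻¹ := by positivity
  have hu1 : (1 + z)⁻¹ ≤ 1 := by
    rw [inv_le_one₀ h1]; linarith
  rw [ev, Polynomial.eval_eq_sum_range]
  refine (Finset.abs_sum_le_sum_abs _ _).trans (Finset.sum_le_sum fun i _ => ?_)
  rw [abs_mul]
  calc |p.coeff i| * |(1 + z)⁻¹ ^ i| ≤ |p.coeff i| * 1 := by
        refine mul_le_mul_of_nonneg_left ?_ (abs_nonneg _)
        rw [abs_pow, abs_of_nonneg hu0]
        exact pow_le_one₀ hu0 hu1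
    _ = |p.coeff i| := mul_one _

end Stmt3Aux

/-- For every m ≥ 1 there are families of smooth bounded functions (φ_{β,m}) and (φ^{β,m})
on [0,∞) such that [Z₃^m, ∂_z]f = Σ_{β<m} φ_{β,m} Z₃^β ∂_z f = Σ_{β<m} φ^{β,m} ∂_z Z₃^β f. -/
theorem stmt3 (m : ℕ) (hm : 1 ≤ m) :
    ∃ a b : ℕ → ℝ → ℝ,
      (∀ β < m, ContDiffOn ℝ (⊤ : ℕ∞) (a β) (Ici 0) ∧ ∃ C : ℝ, ∀ z ∈ Ici (0:ℝ), |a β z| ≤ C) ∧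
      (∀ β < m, ContDiffOn ℝ (⊤ : ℕ∞) (b β) (Ici 0) ∧ ∃ C : ℝ, ∀ z ∈ Ici (0:ℝ), |b β z| ≤ C) ∧
      ∀ f : ℝ → ℝ, ContDiff ℝ (⊤ : ℕ∞) f → ∀ z ∈ Ici (0:ℝ),
        (Z3^[m] (deriv f) z - deriv (Z3^[m] f) z
            = ∑ β ∈ Finset.range m, a β z * Z3^[β] (deriv f) z) ∧
        (Z3^[m] (deriv f) z - deriv (Z3^[m] f) z
            = ∑ β ∈ Finset.range m, b β z * deriv (Z3^[β] f) z) := by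
  classical
  open Stmt3Aux in
  refine ⟨fun β => ev (AA m β), fun β => ev (BB m β), ?_, ?_, ?_⟩
  · intro β _
    exact ⟨(contDiffOn_ev (AA m β)).mono Ici_subset, ev_bound (AA m β)⟩
  · intro β _
    exact ⟨(contDiffOn_ev (BB m β)).mono Ici_subset, ev_bound (BB m β)⟩
  · intro f hf z hz
    have hzS : z ∈ Stmt3Aux.S := Ici_subset hz
    constructor
    · exact mainA hf m z hzS
    · have hB := mainB hf m z hzS
      rw [Finset.sum_range_succ, BB_diag m] at hB
      have h1 : ev (1 : Polynomial ℝ) z = 1 := by simp [ev]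
      rw [h1, one_mul] at hB
      rw [hB]
      ring
end

section
/- Let φ(z) = z/(1+z) and Z₃ = φ∂_z. For every m ≥ 1 there exist families of smooth bounded functions (ψ_{1,β,m}), (ψ_{2,β,m}) for 0≤β<m on [0,∞) such that, for all smooth f, [Z₃^m, ∂_{zz}]f = Σ_{β=0}^{m-1} ψ_{1,β,m}(z) Z₃^β ∂_z f + ψ_{2,β,m}(z) Z₃^β ∂_{zz} f. -/
open Real Set

namespace Stmt4

open Polynomial

/-- The domain: an open set containing `[0, ∞)`. -/
def UU : Set ℝ := Ioi (-1)

lemma isOpen_UU : IsOpen UU := isOpen_Ioi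

lemma hne {z : ℝ} (hz : z ∈ UU) : 1 + z ≠ 0 := by
  have : (-1:ℝ) < z := hz
  intro h; linarith

lemma Ici_subset_UU : Ici (0:ℝ) ⊆ UU := fun z hz => by
  have : (0:ℝ) ≤ z := hz
  show (-1:ℝ) < z; linarith

/-- evaluation of a polynomial at `1/(1+z)` -/
noncomputable def ev (p : ℝ[X]) (z : ℝ) : ℝ := p.eval ((1 + z)⁻¹)

lemma poly_contDiff (p : ℝ[X]) : ContDiff ℝ (⊤ : ℕ∞) (fun x : ℝ => p.eval x) := by
  induction p using Polynomial.induction_on' with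
  | add p q hp hq => simpa using hp.add hq
  | monomial n a =>
      simpa [Polynomial.eval_monomial] using (contDiff_const (c := a)).mul (contDiff_id.pow n)

lemma inv_contDiffOn : ContDiffOn ℝ (⊤ : ℕ∞) (fun z : ℝ => (1 + z)⁻¹) UU :=
  (contDiffOn_const.add contDiffOn_id).inv (fun _ hz => hne hz)

lemma ev_contDiffOn (p : ℝ[X]) : ContDiffOn ℝ (⊤ : ℕ∞) (ev p) UU :=
  (poly_contDiff p).comp_contDiffOn inv_contDiffOn

lemma ev_add (p q : ℝ[X]) (z : ℝ) : ev (p + q) z = ev p z + ev q z := by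
  simp [ev]

lemma ev_mul (p q : ℝ[X]) (z : ℝ) : ev (p * q) z = ev p z * ev q z := by
  simp [ev]

lemma ev_zero (z : ℝ) : ev 0 z = 0 := by simp [ev]

lemma ev_one (z : ℝ) : ev 1 z = 1 := by simp [ev]

lemma ev_C (a : ℝ) (z : ℝ) : ev (C a) z = a := by simp [ev]

/-- the polynomial representing the z-derivative of `ev p` -/
noncomputable def dp (p : ℝ[X]) : ℝ[X] := -(X ^ 2 * p.derivative)

lemma hasDerivAt_ev (p : ℝ[X]) {z : ℝ} (hz : z ∈ UU) :
    HasDerivAt (ev p) (ev (dp p) z) z := by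
  have h1 : HasDerivAt (fun z : ℝ => 1 + z) 1 z := (hasDerivAt_id z).const_add 1
  have h2 : HasDerivAt (fun z : ℝ => (1 + z)⁻¹) (-1 / (1 + z) ^ 2) z := h1.inv (hne hz)
  have h3 := (Polynomial.hasDerivAt p ((1 + z)⁻¹)).comp z h2
  refine h3.congr_deriv ?_
  have hzne := hne hz
  simp only [dp, ev, eval_neg, eval_mul, eval_pow, eval_X]
  field_simp

lemma deriv_ev (p : ℝ[X]) {z : ℝ} (hz : z ∈ UU) :
    deriv (ev p) z = ev (dp p) z := (hasDerivAt_ev p hz).deriv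

lemma phi_eq_ev {z : ℝ} (hz : z ∈ UU) : phi z = ev (1 - X) z := by
  have hzne := hne hz
  simp only [phi, ev, eval_sub, eval_one, eval_X]
  field_simp
  ring

lemma phi_contDiffOn : ContDiffOn ℝ (⊤ : ℕ∞) phi UU :=
  contDiffOn_id.div (contDiffOn_const.add contDiffOn_id) (fun _ hz => hne hz)

lemma deriv_phi {z : ℝ} (hz : z ∈ UU) : deriv phi z = ev (X ^ 2) z := by
  have h : ∀ x ∈ UU, phi x = ev (1 - X) x := fun x hx => phi_eq_ev hx
  have hev : phi =ᶠ[nhds z] ev (1 - X) :=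
    Filter.eventuallyEq_of_mem (isOpen_UU.mem_nhds hz) h
  rw [hev.deriv_eq, deriv_ev _ hz]
  simp [ev, dp]

/-- smooth on `UU` -/
def Sm (g : ℝ → ℝ) : Prop := ContDiffOn ℝ (⊤ : ℕ∞) g UU

lemma phi_Sm : Sm phi := phi_contDiffOn

lemma Sm.deriv {g : ℝ → ℝ} (hg : Sm g) : Sm (deriv g) :=
  hg.deriv_of_isOpen isOpen_UU (by simp)

lemma Sm.z3 {g : ℝ → ℝ} (hg : Sm g) : Sm (Z3 g) :=
  phi_contDiffOn.mul hg.deriv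

lemma Sm.iter {g : ℝ → ℝ} (hg : Sm g) (m : ℕ) : Sm (Z3^[m] g) := by
  induction m with
  | zero => exact hg
  | succ n ih => rw [Function.iterate_succ_apply']; exact ih.z3

lemma Sm.diffAt {g : ℝ → ℝ} (hg : Sm g) {z : ℝ} (hz : z ∈ UU) :
    DifferentiableAt ℝ g z :=
  (hg.contDiffAt (isOpen_UU.mem_nhds hz)).differentiableAt (by simp)

lemma ev_diffAt (p : ℝ[X]) {z : ℝ} (hz : z ∈ UU) : DifferentiableAt ℝ (ev p) z :=
  (hasDerivAt_ev p hz).differentiableAt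

/-! ### pointwise calculus on `UU` -/

lemma Z3_apply (g : ℝ → ℝ) (z : ℝ) : Z3 g z = phi z * deriv g z := rfl

lemma deriv_Z3 {g : ℝ → ℝ} (hg : Sm g) {z : ℝ} (hz : z ∈ UU) :
    deriv (Z3 g) z = ev (X ^ 2) z * deriv g z + phi z * deriv (deriv g) z := by
  have h : deriv (Z3 g) z =
      deriv phi z * deriv g z + phi z * deriv (deriv g) z := by
    apply deriv_mul (phi_Sm.diffAt hz) (hg.deriv.diffAt hz)
  rw [h, deriv_phi hz]

/-- equality on `UU` propagates through iterates of `Z3` -/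
lemma Z3_iter_congr {g h : ℝ → ℝ} (hgh : ∀ x ∈ UU, g x = h x) (m : ℕ) :
    ∀ z ∈ UU, Z3^[m] g z = Z3^[m] h z := by
  induction m with
  | zero => exact hgh
  | succ n ih =>
      intro z hz
      rw [Function.iterate_succ_apply', Function.iterate_succ_apply']
      show phi z * deriv (Z3^[n] g) z = phi z * deriv (Z3^[n] h) z
      have : deriv (Z3^[n] g) z = deriv (Z3^[n] h) z :=
        Filter.EventuallyEq.deriv_eq
          (Filter.eventuallyEq_of_mem (isOpen_UU.mem_nhds hz) ih)
      rw [this]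

lemma Z3_iter_add {g h : ℝ → ℝ} (hg : Sm g) (hh : Sm h) (m : ℕ) :
    ∀ z ∈ UU, Z3^[m] (fun x => g x + h x) z = Z3^[m] g z + Z3^[m] h z := by
  induction m with
  | zero => intro z _; rfl
  | succ n ih =>
      intro z hz
      rw [Function.iterate_succ_apply', Function.iterate_succ_apply',
        Function.iterate_succ_apply']
      show phi z * deriv (Z3^[n] fun x => g x + h x) z =
        phi z * deriv (Z3^[n] g) z + phi z * deriv (Z3^[n] h) z
      have h1 : deriv (Z3^[n] fun x => g x + h x) z =
          deriv (fun x => Z3^[n] g x + Z3^[n] h x) z :=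
        Filter.EventuallyEq.deriv_eq
          (Filter.eventuallyEq_of_mem (isOpen_UU.mem_nhds hz) ih)
      rw [h1, deriv_fun_add ((hg.iter n).diffAt hz) ((hh.iter n).diffAt hz)]
      ring

/-! ### spans (with coefficients uniform in the function) -/

/-- `Φ g` agrees on `UU` with a combination `∑ ev (c β) * D g β`, `β < n`,
with coefficients independent of `g`. -/
def spanO (n : ℕ) (D : (ℝ → ℝ) → ℕ → ℝ → ℝ) (Φ : (ℝ → ℝ) → ℝ → ℝ) : Prop :=
  ∃ c : ℕ → ℝ[X], ∀ g, Sm g → ∀ z ∈ UU,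
    Φ g z = ∑ β ∈ Finset.range n, ev (c β) z * D g β z

lemma spanO.congr {n D Φ Φ'} (hs : spanO n D Φ)
    (he : ∀ g, Sm g → ∀ z ∈ UU, Φ' g z = Φ g z) : spanO n D Φ' := by
  obtain ⟨c, hc⟩ := hs
  exact ⟨c, fun g hg z hz => (he g hg z hz).trans (hc g hg z hz)⟩

lemma spanO_zero (n D) : spanO n D (fun _ _ => 0) :=
  ⟨0, fun g hg z hz => by simp [ev_zero]⟩

lemma spanO.add {n D Φ1 Φ2} (hs1 : spanO n D Φ1) (hs2 : spanO n D Φ2) :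
    spanO n D (fun g z => Φ1 g z + Φ2 g z) := by
  obtain ⟨c1, hc1⟩ := hs1
  obtain ⟨c2, hc2⟩ := hs2
  refine ⟨fun β => c1 β + c2 β, fun g hg z hz => ?_⟩
  dsimp only
  rw [hc1 g hg z hz, hc2 g hg z hz, ← Finset.sum_add_distrib]
  exact Finset.sum_congr rfl fun β _ => by rw [ev_add]; ring

lemma spanO.evmul {n D Φ} (p : ℝ[X]) (hs : spanO n D Φ) :
    spanO n D (fun g z => ev p z * Φ g z) := by
  obtain ⟨c, hc⟩ := hs
  refine ⟨fun β => p * c β, fun g hg z hz => ?_⟩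
  dsimp only
  rw [hc g hg z hz, Finset.mul_sum]
  exact Finset.sum_congr rfl fun β _ => by rw [ev_mul]; ring

lemma spanO.mono {n n' D Φ} (hnn : n ≤ n') (hs : spanO n D Φ) : spanO n' D Φ := by
  obtain ⟨c, hc⟩ := hs
  refine ⟨fun β => if β < n then c β else 0, fun g hg z hz => ?_⟩
  dsimp only
  rw [hc g hg z hz]
  rw [← Finset.sum_subset (Finset.range_subset_range.mpr hnn)]
  · exact Finset.sum_congr rfl fun β hβ => by
      rw [if_pos (Finset.mem_range.mp hβ)]
  · intro β _ hβ
    rw [if_neg (fun hlt => hβ (Finset.mem_range.mpr hlt)), ev_zero, zero_mul]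

lemma spanO_basis {n : ℕ} (D : (ℝ → ℝ) → ℕ → ℝ → ℝ) {β0 : ℕ} (hβ : β0 < n) :
    spanO n D (fun g => D g β0) := by
  refine ⟨fun β => if β = β0 then 1 else 0, fun g hg z hz => ?_⟩
  dsimp only
  rw [Finset.sum_eq_single β0]
  · rw [if_pos rfl, ev_one, one_mul]
  · intro β _ hne; rw [if_neg hne, ev_zero, zero_mul]
  · intro h; exact absurd (Finset.mem_range.mpr hβ) h

lemma spanO_sum {n D} {ι : Type*} (s : Finset ι) (F : ι → (ℝ → ℝ) → ℝ → ℝ)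
    (hF : ∀ i ∈ s, spanO n D (F i)) :
    spanO n D (fun g z => ∑ i ∈ s, F i g z) := by
  classical
  induction s using Finset.induction_on with
  | empty => simpa using spanO_zero n D
  | @insert a s' hnotmem ih =>
      have h1 := hF a (Finset.mem_insert_self a s')
      have h2 := ih (fun i hi => hF i (Finset.mem_insert_of_mem hi))
      exact (h1.add h2).congr (fun g hg z hz => by rw [Finset.sum_insert hnotmem])

lemma spanO_comb {n j : ℕ} (hj : j ≤ n) (D : (ℝ → ℝ) → ℕ → ℝ → ℝ) (Q : ℕ → ℝ[X]) :
    spanO n D (fun g z => ∑ k ∈ Finset.range j, ev (Q k) z * D g k z) :=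
  spanO_sum (Finset.range j) _ fun k hk =>
    (spanO_basis D (lt_of_lt_of_le (Finset.mem_range.mp hk) hj)).evmul (Q k)

/-! ### pulling a coefficient through the iterates -/

noncomputable def q1 (p : ℝ[X]) : ℝ[X] := (1 - X) * dp p

lemma Sm.evmul {g : ℝ → ℝ} (hg : Sm g) (p : ℝ[X]) :
    Sm (fun y => ev p y * g y) := (ev_contDiffOn p).mul hg

lemma Z3_evmul {g : ℝ → ℝ} (hg : Sm g) (p : ℝ[X]) :
    ∀ x ∈ UU, Z3 (fun y => ev p y * g y) x
      = ev (q1 p) x * g x + ev p x * Z3 g x := by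
  intro x hx
  show phi x * deriv (fun y => ev p y * g y) x = _
  rw [deriv_fun_mul (ev_diffAt p hx) (hg.diffAt hx), deriv_ev p hx]
  rw [Z3_apply, q1, ev_mul, ← phi_eq_ev hx]
  ring

lemma lemC (m : ℕ) (p : ℝ[X]) : ∃ Q : ℕ → ℝ[X], ∀ g, Sm g → ∀ z ∈ UU,
    Z3^[m] (fun x => ev p x * g x) z
      = ∑ k ∈ Finset.range (m + 1), ev (Q k) z * Z3^[k] g z := by
  induction m generalizing p with
  | zero =>
      exact ⟨fun _ => p, fun g hg z hz => by simp⟩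
  | succ m ih =>
      obtain ⟨Q1, hQ1⟩ := ih (q1 p)
      obtain ⟨Q2, hQ2⟩ := ih p
      refine ⟨fun k => (if k < m + 1 then Q1 k else 0)
        + (if k = 0 then 0 else Q2 (k - 1)), fun g hg z hz => ?_⟩
      rw [Function.iterate_succ_apply]
      have hcongr : ∀ x ∈ UU, Z3 (fun y => ev p y * g y) x
          = (fun y => ev (q1 p) y * g y) x + (fun y => ev p y * Z3 g y) x :=
        fun x hx => Z3_evmul hg p x hx
      have h1 : Z3^[m] (Z3 (fun x => ev p x * g x)) z
          = Z3^[m] (fun x => (fun y => ev (q1 p) y * g y) x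
              + (fun y => ev p y * Z3 g y) x) z :=
        Z3_iter_congr hcongr m z hz
      rw [h1, Z3_iter_add (hg.evmul (q1 p)) (hg.z3.evmul p) m z hz,
        hQ1 g hg z hz, hQ2 (Z3 g) hg.z3 z hz]
      have hshift : ∀ k, Z3^[k] (Z3 g) = Z3^[k + 1] g :=
        fun k => (Function.iterate_succ_apply Z3 k g).symm
      conv_lhs => rw [show (∑ k ∈ Finset.range (m + 1), ev (Q2 k) z * Z3^[k] (Z3 g) z)
        = ∑ k ∈ Finset.range (m + 1), ev (Q2 k) z * Z3^[k + 1] g z from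
          Finset.sum_congr rfl fun k _ => by rw [hshift k]]
      have hsplit : (∑ k ∈ Finset.range (m + 2),
            ev ((if k < m + 1 then Q1 k else 0) + (if k = 0 then 0 else Q2 (k - 1))) z
              * Z3^[k] g z)
          = (∑ k ∈ Finset.range (m + 2), ev (if k < m + 1 then Q1 k else 0) z * Z3^[k] g z)
            + ∑ k ∈ Finset.range (m + 2),
                ev (if k = 0 then 0 else Q2 (k - 1)) z * Z3^[k] g z := by
        rw [← Finset.sum_add_distrib]
        exact Finset.sum_congr rfl fun k _ => by rw [ev_add]; ring
      rw [hsplit, Finset.sum_range_succ (fun k => ev (if k < m + 1 then Q1 k else 0) z * Z3^[k] g z),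
        if_neg (lt_irrefl (m + 1)), ev_zero, zero_mul, add_zero,
        Finset.sum_range_succ' (fun k => ev (if k = 0 then 0 else Q2 (k - 1)) z * Z3^[k] g z)]
      simp only [if_pos, Nat.succ_ne_zero, if_neg, ev_zero, zero_mul, add_zero]
      congr 1
      exact Finset.sum_congr rfl fun k hk => by
        rw [if_pos (Finset.mem_range.mp hk)]

/-! ### the first-order commutator -/

noncomputable def DD1 (g : ℝ → ℝ) (β : ℕ) : ℝ → ℝ := Z3^[β] (deriv g)
noncomputable def DD2 (g : ℝ → ℝ) (β : ℕ) : ℝ → ℝ := Z3^[β] (deriv (deriv g))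

def span1 (n : ℕ) (Φ : (ℝ → ℝ) → ℝ → ℝ) : Prop := spanO n DD1 Φ

lemma derivZ3_decomp {g : ℝ → ℝ} (hg : Sm g) :
    ∀ x ∈ UU, deriv (Z3 g) x = ev (X ^ 2) x * deriv g x + Z3 (deriv g) x :=
  fun x hx => deriv_Z3 hg hx

/-- `Z3^[β] (deriv (Z3 g))` lies in the span of `Z3^[k] (deriv g)`, `k ≤ β + 1`. -/
lemma span1_iter_derivZ3 (β : ℕ) {n : ℕ} (hβ : β + 2 ≤ n) :
    span1 n (fun g => Z3^[β] (deriv (Z3 g))) := by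
  obtain ⟨Q, hQ⟩ := lemC β (X ^ 2)
  have h1 : spanO n DD1
      (fun g z => (∑ k ∈ Finset.range (β + 1), ev (Q k) z * Z3^[k] (deriv g) z)
        + Z3^[β + 1] (deriv g) z) :=
    (spanO_comb (by omega) DD1 Q).add
      ((spanO_basis DD1 (show β + 1 < n by omega)).congr (fun g hg z _ => rfl))
  refine h1.congr (fun g hg z hz => ?_)
  have hc : Z3^[β] (deriv (Z3 g)) z
      = Z3^[β] (fun x => (fun y => ev (X ^ 2) y * deriv g y) x
          + (fun y => Z3 (deriv g) y) x) z :=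
    Z3_iter_congr (fun x hx => derivZ3_decomp hg x hx) β z hz
  rw [hc, Z3_iter_add (hg.deriv.evmul (X ^ 2)) hg.deriv.z3 β z hz,
    hQ (deriv g) hg.deriv z hz, ← Function.iterate_succ_apply]

lemma span1_precomp {m n : ℕ} {Φ : (ℝ → ℝ) → ℝ → ℝ}
    (hmn : m + 1 ≤ n) (hs : span1 m Φ) : span1 n (fun g => Φ (Z3 g)) := by
  obtain ⟨c, hc⟩ := hs
  have h1 : span1 n (fun g z => ∑ β ∈ Finset.range m,
      ev (c β) z * Z3^[β] (deriv (Z3 g)) z) :=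
    spanO_sum (Finset.range m) _ fun β hβ =>
      (span1_iter_derivZ3 β (by
        have := Finset.mem_range.mp hβ; omega)).evmul (c β)
  exact h1.congr (fun g hg z hz => hc (Z3 g) hg.z3 z hz)

lemma lemA (m : ℕ) :
    span1 m (fun g z => deriv (Z3^[m] g) z - Z3^[m] (deriv g) z) := by
  induction m with
  | zero =>
      exact (spanO_zero 0 DD1).congr (fun g hg z hz => by simp)
  | succ m ih =>
      have hIH : span1 (m + 1)
          (fun g z => deriv (Z3^[m] (Z3 g)) z - Z3^[m] (deriv (Z3 g)) z) :=
        span1_precomp (le_refl _) ih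
      obtain ⟨Q, hQ⟩ := lemC m (X ^ 2)
      have hR : span1 (m + 1)
          (fun g z => Z3^[m] (fun x => ev (X ^ 2) x * deriv g x) z) := by
        refine (spanO_comb (le_refl (m + 1)) DD1 Q).congr (fun g hg z hz => ?_)
        exact hQ (deriv g) hg.deriv z hz
      refine (hIH.add hR).congr (fun g hg z hz => ?_)
      have hc : Z3^[m] (deriv (Z3 g)) z
          = Z3^[m] (fun x => (fun y => ev (X ^ 2) y * deriv g y) x
              + (fun y => Z3 (deriv g) y) x) z :=
        Z3_iter_congr (fun x hx => derivZ3_decomp hg x hx) m z hz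
      have hsplit : Z3^[m] (deriv (Z3 g)) z
          = Z3^[m] (fun x => ev (X ^ 2) x * deriv g x) z + Z3^[m + 1] (deriv g) z := by
        rw [hc, Z3_iter_add (hg.deriv.evmul (X ^ 2)) hg.deriv.z3 m z hz,
          ← Function.iterate_succ_apply]
      have hit : deriv (Z3^[m + 1] g) z = deriv (Z3^[m] (Z3 g)) z := by
        rw [Function.iterate_succ_apply]
      rw [hit]
      rw [Function.iterate_succ_apply Z3 m (deriv g)] at hsplit ⊢
      linarith [hsplit]

/-! ### the two-family span -/

def span2 (n : ℕ) (Φ : (ℝ → ℝ) → ℝ → ℝ) : Prop :=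
  ∃ Φ1 Φ2 : (ℝ → ℝ) → ℝ → ℝ, spanO n DD1 Φ1 ∧ spanO n DD2 Φ2 ∧
    ∀ g, Sm g → ∀ z ∈ UU, Φ g z = Φ1 g z + Φ2 g z

lemma span2.congr {n Φ Φ'} (hs : span2 n Φ)
    (he : ∀ g, Sm g → ∀ z ∈ UU, Φ' g z = Φ g z) : span2 n Φ' := by
  obtain ⟨Φ1, Φ2, hs1, hs2, hsum⟩ := hs
  exact ⟨Φ1, Φ2, hs1, hs2, fun g hg z hz => (he g hg z hz).trans (hsum g hg z hz)⟩

lemma span2_zero (n : ℕ) : span2 n (fun _ _ => 0) :=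
  ⟨fun _ _ => 0, fun _ _ => 0, spanO_zero _ _, spanO_zero _ _, fun g _ z _ => by simp⟩

lemma span2.add {n Φ1 Φ2} (hs1 : span2 n Φ1) (hs2 : span2 n Φ2) :
    span2 n (fun g z => Φ1 g z + Φ2 g z) := by
  obtain ⟨a1, b1, ha1, hb1, he1⟩ := hs1
  obtain ⟨a2, b2, ha2, hb2, he2⟩ := hs2
  exact ⟨fun g z => a1 g z + a2 g z, fun g z => b1 g z + b2 g z, ha1.add ha2, hb1.add hb2,
    fun g hg z hz => by dsimp only; rw [he1 g hg z hz, he2 g hg z hz]; ring⟩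

lemma span2.evmul {n Φ} (p : ℝ[X]) (hs : span2 n Φ) :
    span2 n (fun g z => ev p z * Φ g z) := by
  obtain ⟨a, b, ha, hb, he⟩ := hs
  exact ⟨fun g z => ev p z * a g z, fun g z => ev p z * b g z, ha.evmul p, hb.evmul p,
    fun g hg z hz => by dsimp only; rw [he g hg z hz]; ring⟩

lemma span2.mono {n n' Φ} (hnn : n ≤ n') (hs : span2 n Φ) : span2 n' Φ := by
  obtain ⟨a, b, ha, hb, he⟩ := hs
  exact ⟨a, b, ha.mono hnn, hb.mono hnn, he⟩

lemma span2_of1 {n Φ} (hs : spanO n DD1 Φ) : span2 n Φ :=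
  ⟨Φ, fun _ _ => 0, hs, spanO_zero _ _, fun g _ z _ => by simp⟩

lemma span2_of2 {n Φ} (hs : spanO n DD2 Φ) : span2 n Φ :=
  ⟨fun _ _ => 0, Φ, spanO_zero _ _, hs, fun g _ z _ => by simp⟩

lemma span2_sum {n} {ι : Type*} (s : Finset ι) (F : ι → (ℝ → ℝ) → ℝ → ℝ)
    (hF : ∀ i ∈ s, span2 n (F i)) :
    span2 n (fun g z => ∑ i ∈ s, F i g z) := by
  classical
  induction s using Finset.induction_on with
  | empty => simpa using span2_zero n
  | @insert a s' hnotmem ih =>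
      have h1 := hF a (Finset.mem_insert_self a s')
      have h2 := ih (fun i hi => hF i (Finset.mem_insert_of_mem hi))
      exact (h1.add h2).congr (fun g hg z hz => by rw [Finset.sum_insert hnotmem])

lemma phi_mul_ev_dp (p : ℝ[X]) {z : ℝ} (hz : z ∈ UU) :
    phi z * ev (dp p) z = ev (q1 p) z := by
  rw [q1, ev_mul, phi_eq_ev hz]

/-- The key closure property: `φ ∂_z` of a `span2 m` operator is `span2 (m+1)`. -/
lemma span2_phiDeriv {Φ : (ℝ → ℝ) → ℝ → ℝ} {m : ℕ} (hs : span2 m Φ) :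
    span2 (m + 1) (fun g z => phi z * deriv (Φ g) z) := by
  obtain ⟨Φ1, Φ2, ⟨c, hc⟩, ⟨d, hd⟩, hsum⟩ := hs
  set G : ℕ → (ℝ → ℝ) → ℝ → ℝ := fun β g z =>
    ev (q1 (c β)) z * DD1 g β z + ev (c β) z * DD1 g (β + 1) z
      + (ev (q1 (d β)) z * DD2 g β z + ev (d β) z * DD2 g (β + 1) z) with hG
  have hmem : span2 (m + 1) (fun g z => ∑ β ∈ Finset.range m, G β g z) := by
    refine span2_sum (Finset.range m) G (fun β hβ => ?_)
    have hβm := Finset.mem_range.mp hβ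
    have e1 : span2 (m + 1)
        (fun g z => ev (q1 (c β)) z * DD1 g β z + ev (c β) z * DD1 g (β + 1) z) :=
      (span2_of1 ((spanO_basis DD1 (show β < m + 1 by omega)).evmul (q1 (c β)))).add
        (span2_of1 ((spanO_basis DD1 (show β + 1 < m + 1 by omega)).evmul (c β)))
    have e2 : span2 (m + 1)
        (fun g z => ev (q1 (d β)) z * DD2 g β z + ev (d β) z * DD2 g (β + 1) z) :=
      (span2_of2 ((spanO_basis DD2 (show β < m + 1 by omega)).evmul (q1 (d β)))).add
        (span2_of2 ((spanO_basis DD2 (show β + 1 < m + 1 by omega)).evmul (d β)))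
    exact (e1.add e2).congr (fun g hg z hz => rfl)
  refine hmem.congr (fun g hg z hz => ?_)
  have hsmA : ∀ β, Sm (DD1 g β) := fun β => hg.deriv.iter β
  have hsmB : ∀ β, Sm (DD2 g β) := fun β => hg.deriv.deriv.iter β
  have hhF : deriv (Φ g) z = deriv (fun x => ∑ β ∈ Finset.range m,
      (ev (c β) x * DD1 g β x + ev (d β) x * DD2 g β x)) z := by
    apply Filter.EventuallyEq.deriv_eq
    refine Filter.eventuallyEq_of_mem (isOpen_UU.mem_nhds hz) (fun x hx => ?_)
    rw [hsum g hg x hx, hc g hg x hx, hd g hg x hx]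
    rw [← Finset.sum_add_distrib]
  have hdF : deriv (fun x => ∑ β ∈ Finset.range m,
        (ev (c β) x * DD1 g β x + ev (d β) x * DD2 g β x)) z
      = ∑ β ∈ Finset.range m,
      (ev (dp (c β)) z * DD1 g β z + ev (c β) z * deriv (DD1 g β) z
        + (ev (dp (d β)) z * DD2 g β z + ev (d β) z * deriv (DD2 g β) z)) := by
    rw [deriv_fun_sum (A := fun β x => ev (c β) x * DD1 g β x + ev (d β) x * DD2 g β x) (fun β _ => (((ev_diffAt (c β) hz).mul ((hsmA β).diffAt hz)).add
      ((ev_diffAt (d β) hz).mul ((hsmB β).diffAt hz))))]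
    refine Finset.sum_congr rfl (fun β _ => ?_)
    rw [deriv_fun_add (f := fun x => ev (c β) x * DD1 g β x) (g := fun x => ev (d β) x * DD2 g β x)
      ((ev_diffAt (c β) hz).mul ((hsmA β).diffAt hz))
      ((ev_diffAt (d β) hz).mul ((hsmB β).diffAt hz)),
      deriv_fun_mul (ev_diffAt (c β) hz) ((hsmA β).diffAt hz),
      deriv_fun_mul (ev_diffAt (d β) hz) ((hsmB β).diffAt hz),
      deriv_ev _ hz, deriv_ev _ hz]
  rw [hhF, hdF, Finset.mul_sum]
  refine Finset.sum_congr rfl (fun β _ => ?_)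
  have hA1 : phi z * deriv (DD1 g β) z = DD1 g (β + 1) z := by
    show phi z * deriv (Z3^[β] (deriv g)) z = Z3^[β + 1] (deriv g) z
    rw [Function.iterate_succ_apply']
    rfl
  have hB1 : phi z * deriv (DD2 g β) z = DD2 g (β + 1) z := by
    show phi z * deriv (Z3^[β] (deriv (deriv g))) z = Z3^[β + 1] (deriv (deriv g)) z
    rw [Function.iterate_succ_apply']
    rfl
  rw [hG]
  dsimp only
  rw [← hA1, ← hB1, ← phi_mul_ev_dp (c β) hz, ← phi_mul_ev_dp (d β) hz]
  ring

/-! ### the second-order commutator -/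

lemma lemB (m : ℕ) :
    span2 m (fun g z => deriv (deriv (Z3^[m] g)) z - Z3^[m] (deriv (deriv g)) z) := by
  induction m with
  | zero =>
      exact (span2_zero 0).congr (fun g hg z hz => by simp)
  | succ m ih =>
      have M1 : span2 (m + 1) (fun g z => ev (dp (X ^ 2)) z * Z3^[m] (deriv g) z) :=
        span2_of1 ((spanO_basis DD1 (Nat.lt_succ_self m)).evmul (dp (X ^ 2)))
      have M2 : span2 (m + 1) (fun g z => ev (dp (X ^ 2)) z
          * (deriv (Z3^[m] g) z - Z3^[m] (deriv g) z)) :=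
        span2_of1 (((lemA m).mono (Nat.le_succ m)).evmul (dp (X ^ 2)))
      have M3 : span2 (m + 1) (fun g z => ev (C 2 * X ^ 2) z
          * Z3^[m] (deriv (deriv g)) z) :=
        span2_of2 ((spanO_basis DD2 (Nat.lt_succ_self m)).evmul (C 2 * X ^ 2))
      have M4 : span2 (m + 1) (fun g z => ev (C 2 * X ^ 2) z
          * (deriv (deriv (Z3^[m] g)) z - Z3^[m] (deriv (deriv g)) z)) :=
        (ih.mono (Nat.le_succ m)).evmul (C 2 * X ^ 2)
      have M5 : span2 (m + 1) (fun g z => phi z * deriv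
          (fun x => deriv (deriv (Z3^[m] g)) x - Z3^[m] (deriv (deriv g)) x) z) :=
        span2_phiDeriv ih
      refine ((((M1.add M2).add (M3.add M4)).add M5).congr (fun g hg z hz => ?_))
      have hF : Sm (Z3^[m] g) := hg.iter m
      have hG : Sm (Z3^[m] (deriv (deriv g))) := hg.deriv.deriv.iter m
      have h0 : Z3^[m + 1] g = Z3 (Z3^[m] g) := Function.iterate_succ_apply' Z3 m g
      have h0' : Z3^[m + 1] (deriv (deriv g))
          = Z3 (Z3^[m] (deriv (deriv g))) := Function.iterate_succ_apply' Z3 m _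
      rw [h0, h0']
      have hd1 : ∀ x ∈ UU, deriv (Z3 (Z3^[m] g)) x
          = ev (X ^ 2) x * deriv (Z3^[m] g) x + phi x * deriv (deriv (Z3^[m] g)) x :=
        fun x hx => deriv_Z3 hF hx
      have hd2 : deriv (deriv (Z3 (Z3^[m] g))) z
          = deriv (fun x => ev (X ^ 2) x * deriv (Z3^[m] g) x
              + phi x * deriv (deriv (Z3^[m] g)) x) z :=
        Filter.EventuallyEq.deriv_eq
          (Filter.eventuallyEq_of_mem (isOpen_UU.mem_nhds hz) hd1)
      have dA1 : DifferentiableAt ℝ (fun x => ev (X ^ 2) x * deriv (Z3^[m] g) x) z :=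
        (ev_diffAt _ hz).mul (hF.deriv.diffAt hz)
      have dA2 : DifferentiableAt ℝ (fun x => phi x * deriv (deriv (Z3^[m] g)) x) z :=
        (phi_Sm.diffAt hz).mul (hF.deriv.deriv.diffAt hz)
      have hd3 : deriv (deriv (Z3 (Z3^[m] g))) z
          = ev (dp (X ^ 2)) z * deriv (Z3^[m] g) z
            + 2 * (ev (X ^ 2) z * deriv (deriv (Z3^[m] g)) z)
            + phi z * deriv (deriv (deriv (Z3^[m] g))) z := by
        rw [hd2, deriv_fun_add dA1 dA2,
          deriv_fun_mul (ev_diffAt _ hz) (hF.deriv.diffAt hz),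
          deriv_fun_mul (phi_Sm.diffAt hz) (hF.deriv.deriv.diffAt hz),
          deriv_ev _ hz, deriv_phi hz]
        ring
      have hd4 : deriv (deriv (deriv (Z3^[m] g))) z
          = deriv (Z3^[m] (deriv (deriv g))) z
            + deriv (fun x => deriv (deriv (Z3^[m] g)) x
                - Z3^[m] (deriv (deriv g)) x) z := by
        have he : (fun x => deriv (deriv (Z3^[m] g)) x)
            = fun x => Z3^[m] (deriv (deriv g)) x
                + (deriv (deriv (Z3^[m] g)) x - Z3^[m] (deriv (deriv g)) x) := by
          funext x; ring
        conv_lhs => rw [show deriv (deriv (deriv (Z3^[m] g))) z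
          = deriv (fun x => Z3^[m] (deriv (deriv g)) x
              + (deriv (deriv (Z3^[m] g)) x - Z3^[m] (deriv (deriv g)) x)) z from by
            rw [← he]]
        rw [deriv_fun_add (f := Z3^[m] (deriv (deriv g)))
          (g := fun x => deriv (deriv (Z3^[m] g)) x - Z3^[m] (deriv (deriv g)) x) (hG.diffAt hz)
          ((hF.deriv.deriv.diffAt hz).sub (hG.diffAt hz))]
      have hZG : Z3 (Z3^[m] (deriv (deriv g))) z
          = phi z * deriv (Z3^[m] (deriv (deriv g))) z := rfl
      rw [hd3, hd4, hZG, ev_mul, ev_C]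
      ring

lemma ev_bounded (p : ℝ[X]) : ∃ C : ℝ, ∀ z ∈ Ici (0:ℝ), |ev p z| ≤ C := by
  obtain ⟨C, hC⟩ := (isCompact_Icc : IsCompact (Icc (0:ℝ) 1)).exists_bound_of_continuousOn
    (poly_contDiff p).continuous.continuousOn
  refine ⟨C, fun z hz => ?_⟩
  have hz0 : (0:ℝ) ≤ z := hz
  have hmem : (1 + z)⁻¹ ∈ Icc (0:ℝ) 1 := by
    constructor
    · positivity
    · apply inv_le_one_of_one_le₀; linarith
  simpa [ev, Real.norm_eq_abs] using hC _ hmem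

end Stmt4

open Stmt4 Polynomial in
/-- For every m ≥ 1 there are families of smooth bounded functions (ψ_{1,β,m}), (ψ_{2,β,m})
on [0,∞) such that [Z₃^m, ∂_{zz}]f = Σ_{β<m} ψ_{1,β,m} Z₃^β ∂_z f + ψ_{2,β,m} Z₃^β ∂_{zz} f. -/
theorem stmt4 (m : ℕ) (hm : 1 ≤ m) :
    ∃ ψ1 ψ2 : ℕ → ℝ → ℝ,
      (∀ β < m, ContDiffOn ℝ (⊤ : ℕ∞) (ψ1 β) (Ici 0) ∧ ∃ C : ℝ, ∀ z ∈ Ici (0:ℝ), |ψ1 β z| ≤ C) ∧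
      (∀ β < m, ContDiffOn ℝ (⊤ : ℕ∞) (ψ2 β) (Ici 0) ∧ ∃ C : ℝ, ∀ z ∈ Ici (0:ℝ), |ψ2 β z| ≤ C) ∧
      ∀ f : ℝ → ℝ, ContDiff ℝ (⊤ : ℕ∞) f → ∀ z ∈ Ici (0:ℝ),
        Z3^[m] (deriv (deriv f)) z - deriv (deriv (Z3^[m] f)) z
          = ∑ β ∈ Finset.range m,
              (ψ1 β z * Z3^[β] (deriv f) z + ψ2 β z * Z3^[β] (deriv (deriv f)) z) := by
  obtain ⟨Φ1, Φ2, ⟨c, hc⟩, ⟨d, hd⟩, hsum⟩ := Stmt4.lemB m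
  refine ⟨fun β z => -(ev (c β) z), fun β z => -(ev (d β) z), ?_, ?_, ?_⟩
  · intro β _
    refine ⟨((ev_contDiffOn (c β)).mono Ici_subset_UU).neg, ?_⟩
    obtain ⟨C, hC⟩ := ev_bounded (c β)
    exact ⟨C, fun z hz => by simpa [abs_neg] using hC z hz⟩
  · intro β _
    refine ⟨((ev_contDiffOn (d β)).mono Ici_subset_UU).neg, ?_⟩
    obtain ⟨C, hC⟩ := ev_bounded (d β)
    exact ⟨C, fun z hz => by simpa [abs_neg] using hC z hz⟩
  · intro f hf z hz
    have hzU : z ∈ UU := Ici_subset_UU hz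
    have hSf : Sm f := hf.contDiffOn
    have key : deriv (deriv (Z3^[m] f)) z - Z3^[m] (deriv (deriv f)) z
        = Φ1 f z + Φ2 f z := hsum f hSf z hzU
    rw [hc f hSf z hzU, hd f hSf z hzU] at key
    have hgoal : Z3^[m] (deriv (deriv f)) z - deriv (deriv (Z3^[m] f)) z
        = -(∑ β ∈ Finset.range m, ev (c β) z * DD1 f β z)
          + -(∑ β ∈ Finset.range m, ev (d β) z * DD2 f β z) := by linarith
    rw [hgoal, ← Finset.sum_neg_distrib, ← Finset.sum_neg_distrib,
      ← Finset.sum_add_distrib]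
    refine Finset.sum_congr rfl (fun β _ => ?_)
    show -(ev (c β) z * Z3^[β] (deriv f) z) + -(ev (d β) z * Z3^[β] (deriv (deriv f)) z)
      = -(ev (c β) z) * Z3^[β] (deriv f) z + -(ev (d β) z) * Z3^[β] (deriv (deriv f)) z
    ring
end

section
/- Let φ(z) = z/(1+z) and Z₃ = φ∂_z. For every b ∈ ℕ, the function φ · Z₃^b(φ⁻¹) extends to a smooth bounded function on [0,∞). In particular, Z₃^b(1/φ) blows up at z = 0 at rate at most z⁻¹ and is bounded at infinity. -/
open Real Set

noncomputable def Pb : ℕ → Polynomial ℝ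
  | 0 => 1
  | (b+1) => -Polynomial.X^2 * ((1 - Polynomial.X) * (Pb b).derivative + Pb b)

lemma contDiff_eval (p : Polynomial ℝ) : ContDiff ℝ (⊤ : ℕ∞) fun x : ℝ => p.eval x := by
  induction p using Polynomial.induction_on' with
  | add p q hp hq => simpa [Polynomial.eval_add] using hp.add hq
  | monomial n a =>
    simpa [Polynomial.eval_monomial] using contDiff_const.mul (contDiff_id.pow n)

lemma key (b : ℕ) : ∀ z : ℝ, 0 < z →
    Z3^[b] (fun w => (phi w)⁻¹) z = (Pb b).eval ((1+z)⁻¹) * ((1+z)/z) := by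
  induction b with
  | zero =>
    intro z hz
    simp only [Function.iterate_zero_apply, Pb, Polynomial.eval_one, one_mul, phi]
    rw [inv_div]
  | succ b ih =>
    intro z hz
    have h1z : (0:ℝ) < 1 + z := by linarith
    rw [Function.iterate_succ_apply']
    have hev : Z3^[b] (fun w => (phi w)⁻¹) =ᶠ[nhds z]
        (fun w => (Pb b).eval ((1+w)⁻¹) * ((1+w)/w)) := by
      filter_upwards [IsOpen.mem_nhds isOpen_Ioi hz] with w hw
      exact ih w hw
    have h1 : HasDerivAt (fun w : ℝ => 1 + w) 1 z := by
      simpa using (hasDerivAt_id z).const_add (1:ℝ)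
    have h2 : HasDerivAt (fun w : ℝ => (1+w)⁻¹) (-1/(1+z)^2) z := by
      exact h1.inv h1z.ne'
    have h3 : HasDerivAt (fun w : ℝ => (Pb b).eval ((1+w)⁻¹))
        ((Pb b).derivative.eval ((1+z)⁻¹) * (-1/(1+z)^2)) z :=
      (Polynomial.hasDerivAt (Pb b) _).comp z h2
    have h4 : HasDerivAt (fun w : ℝ => (1+w)/w) (-1/z^2) z := by
      have := h1.div (hasDerivAt_id z) hz.ne'
      rw [show (-1/z^2:ℝ) = (1 * id z - (1+z) * 1) / (id z)^2 by simp only [id]; ring]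
      exact this
    have hderiv : HasDerivAt (fun w => (Pb b).eval ((1+w)⁻¹) * ((1+w)/w))
        ((Pb b).derivative.eval ((1+z)⁻¹) * (-1/(1+z)^2) * ((1+z)/z)
          + (Pb b).eval ((1+z)⁻¹) * (-1/z^2)) z := by
      exact h3.mul h4
    show phi z * deriv (Z3^[b] (fun w => (phi w)⁻¹)) z = _
    rw [hev.deriv_eq, hderiv.deriv, phi]
    simp only [Pb, Polynomial.eval_mul, Polynomial.eval_add, Polynomial.eval_neg,
      Polynomial.eval_pow, Polynomial.eval_X, Polynomial.eval_sub, Polynomial.eval_one]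
    field_simp
    ring

/-- For every b ∈ ℕ, φ · Z₃^b(φ⁻¹) extends to a smooth bounded function on [0,∞);
in particular Z₃^b(1/φ) blows up at 0 at rate at most z⁻¹ and is bounded at infinity. -/
theorem stmt5 (b : ℕ) :
    ∃ g : ℝ → ℝ,
      ContDiffOn ℝ (⊤ : ℕ∞) g (Ici 0) ∧
      (∃ C : ℝ, ∀ z ∈ Ici (0:ℝ), |g z| ≤ C) ∧
      (∀ z : ℝ, 0 < z → g z = phi z * Z3^[b] (fun w => (phi w)⁻¹) z) ∧
      ∃ C : ℝ, ∀ z : ℝ, 0 < z → |Z3^[b] (fun w => (phi w)⁻¹) z| ≤ C * (1 + z⁻¹) := by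
  refine ⟨fun z => (Pb b).eval ((1+z)⁻¹), ?_, ?_, ?_, ?_⟩
  · intro z hz
    have h1z : (0:ℝ) < 1 + z := by simp at hz; linarith
    apply ContDiffAt.contDiffWithinAt
    exact (contDiff_eval (Pb b)).contDiffAt.comp z
      ((contDiffAt_inv ℝ h1z.ne').comp z (contDiffAt_const.add contDiffAt_id))
  · obtain ⟨C, hC⟩ := (isCompact_Icc (a := (0:ℝ)) (b := 1)).exists_bound_of_continuousOn
      (contDiff_eval (Pb b)).continuous.continuousOn
    refine ⟨C, fun z hz => ?_⟩
    have hz : (0:ℝ) ≤ z := hz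
    have h1z : (0:ℝ) < 1 + z := by linarith
    have hmem : (1+z)⁻¹ ∈ Icc (0:ℝ) 1 := by
      constructor
      · positivity
      · rw [inv_le_one_iff₀]; right; linarith
    simpa using hC _ hmem
  · intro z hz
    have h1z : (0:ℝ) < 1 + z := by linarith
    rw [key b z hz, phi]
    field_simp
  · obtain ⟨C, hC⟩ := (isCompact_Icc (a := (0:ℝ)) (b := 1)).exists_bound_of_continuousOn
      (contDiff_eval (Pb b)).continuous.continuousOn
    refine ⟨C, fun z hz => ?_⟩
    have h1z : (0:ℝ) < 1 + z := by linarith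
    have hmem : (1+z)⁻¹ ∈ Icc (0:ℝ) 1 := by
      constructor
      · positivity
      · rw [inv_le_one_iff₀]; right; linarith
    have hb : |(Pb b).eval ((1+z)⁻¹)| ≤ C := by simpa using hC _ hmem
    rw [key b z hz, abs_mul]
    have h5 : (1+z)/z = 1 + z⁻¹ := by field_simp; ring
    rw [h5]
    have hpos : (0:ℝ) ≤ 1 + z⁻¹ := by positivity
    rw [abs_of_nonneg hpos]
    exact mul_le_mul_of_nonneg_right hb hpos
end

section
/- Let φ(z) = z/(1+z) and Z₃ = φ∂_z. For every m ∈ ℕ there exists a family of smooth bounded functions (σ_p)_{0≤p≤m} on [0,∞) such that for every smooth function f on (0,∞), [Z₃^m, φ⁻¹]f = Σ_{p=0}^{m} σ_p(z) Z₃^p(φ⁻¹ f). -/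
open Real Set

/-- The coefficient polynomials: Z₃^m (φ g) = φ · ∑ₚ (R m p)(1/(1+z)) Z₃^p g. -/
noncomputable def Rpoly : ℕ → ℕ → Polynomial ℝ
  | 0, p => if p = 0 then 1 else 0
  | (m+1), p =>
      Polynomial.X ^ 2 * Rpoly m p
        - Polynomial.X ^ 2 * (1 - Polynomial.X) * Polynomial.derivative (Rpoly m p)
        + (match p with | 0 => 0 | (q+1) => Rpoly m q)

lemma Rpoly_zero_of_lt : ∀ m p : ℕ, m < p → Rpoly m p = 0 := by
  intro m
  induction m with
  | zero => intro p hp; simp [Rpoly]; omega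
  | succ m ih =>
      intro p hp
      match p, hp with
      | (q+1), hp =>
        have h1 : Rpoly m (q+1) = 0 := ih _ (by omega)
        have h2 : Rpoly m q = 0 := ih _ (by omega)
        simp [Rpoly, h1, h2]

lemma Rpoly_diag : ∀ m : ℕ, Rpoly m m = 1 := by
  intro m
  induction m with
  | zero => simp [Rpoly]
  | succ m ih =>
      have h1 : Rpoly m (m+1) = 0 := Rpoly_zero_of_lt m (m+1) (by omega)
      simp [Rpoly, h1, ih]

lemma phi_pos {z : ℝ} (hz : 0 < z) : 0 < phi z := by
  unfold phi; positivity

lemma one_add_pos {z : ℝ} (hz : 0 < z) : 0 < 1 + z := by linarith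

lemma contDiffOn_phi : ContDiffOn ℝ (⊤ : ℕ∞) phi (Ioi 0) := by
  apply ContDiffOn.div contDiffOn_id (contDiffOn_const.add contDiffOn_id)
  intro x hx; have : (0:ℝ) < x := hx; positivity

/-- Z₃ preserves smoothness on (0, ∞). -/
lemma Z3_contDiffOn {g : ℝ → ℝ} (hg : ContDiffOn ℝ (⊤ : ℕ∞) g (Ioi 0)) :
    ContDiffOn ℝ (⊤ : ℕ∞) (Z3 g) (Ioi 0) :=
  contDiffOn_phi.mul (hg.deriv_of_isOpen isOpen_Ioi (by simp))

lemma Z3_iter_contDiffOn {g : ℝ → ℝ} (hg : ContDiffOn ℝ (⊤ : ℕ∞) g (Ioi 0)) (p : ℕ) :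
    ContDiffOn ℝ (⊤ : ℕ∞) (Z3^[p] g) (Ioi 0) := by
  induction p with
  | zero => exact hg
  | succ p ih => rw [Function.iterate_succ_apply']; exact Z3_contDiffOn ih

lemma Z3_iter_congr {u v : ℝ → ℝ} (h : ∀ w ∈ Ioi (0:ℝ), u w = v w) :
    ∀ p : ℕ, ∀ z ∈ Ioi (0:ℝ), Z3^[p] u z = Z3^[p] v z := by
  intro p
  induction p with
  | zero => exact h
  | succ p ih =>
      intro z hz
      rw [Function.iterate_succ_apply', Function.iterate_succ_apply']
      have hev : Z3^[p] u =ᶠ[nhds z] Z3^[p] v :=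
        Filter.eventuallyEq_of_mem (isOpen_Ioi.mem_nhds hz) ih
      simp only [Z3, hev.deriv_eq]

/-- derivative of w ↦ (1+w)⁻¹ -/
lemma hasDerivAt_inv_one_add {z : ℝ} (hz : 0 < z) :
    HasDerivAt (fun w : ℝ => (1 + w)⁻¹) (-1/(1+z)^2) z := by
  have h : HasDerivAt (fun w : ℝ => 1 + w) 1 z := (hasDerivAt_id z).const_add 1
  have := h.inv (by positivity)
  exact this

lemma hasDerivAt_eval_inv_one_add (q : Polynomial ℝ) {z : ℝ} (hz : 0 < z) :
    HasDerivAt (fun w : ℝ => q.eval ((1+w)⁻¹))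
      (q.derivative.eval ((1+z)⁻¹) * (-1/(1+z)^2)) z :=
  by have := HasDerivAt.comp z (q.hasDerivAt ((1+z)⁻¹)) (hasDerivAt_inv_one_add hz); exact this

lemma hasDerivAt_phi {z : ℝ} (hz : 0 < z) : HasDerivAt phi (((1+z)^2)⁻¹) z := by
  have h1z : (0:ℝ) < 1 + z := by linarith
  have h : HasDerivAt (fun w : ℝ => w / (1+w))
      ((1 * (1+z) - z * 1) / (1+z)^2) z :=
    (hasDerivAt_id z).div ((hasDerivAt_id z).const_add 1) h1z.ne'
  have h2 : (1 * (1+z) - z * 1) / (1+z)^2 = ((1+z)^2)⁻¹ := by ring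
  rw [h2] at h
  exact h

lemma phi_eq_one_sub {z : ℝ} (hz : 0 < z) : phi z = 1 - (1+z)⁻¹ := by
  have h1z : (0:ℝ) < 1 + z := by linarith
  unfold phi
  field_simp
  ring

/-- Main identity. -/
lemma main_identity {g : ℝ → ℝ} (hg : ContDiffOn ℝ (⊤ : ℕ∞) g (Ioi 0)) (m : ℕ) :
    ∀ z ∈ Ioi (0:ℝ), Z3^[m] (fun w => phi w * g w) z
      = phi z * ∑ p ∈ Finset.range (m+1), (Rpoly m p).eval ((1+z)⁻¹) * Z3^[p] g z := by
  induction m with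
  | zero => intro z hz; simp [Rpoly]
  | succ m ih =>
      intro z hz
      have hz' : (0:ℝ) < z := hz
      have h1z : (0:ℝ) < 1 + z := by linarith
      set u : ℝ := (1+z)⁻¹ with hu
      set B : ℕ → ℝ := fun p => Z3^[p] g z with hB
      set A : ℕ → ℝ := fun p => (Rpoly m p).eval u with hA
      set A' : ℕ → ℝ := fun p => ((Rpoly m p).derivative).eval u with hA'
      set d : ℕ → ℝ := fun p => deriv (Z3^[p] g) z with hd
      -- rewrite the iterate
      rw [Function.iterate_succ_apply']
      have hev : Z3^[m] (fun w => phi w * g w) =ᶠ[nhds z]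
          (fun w => phi w * ∑ p ∈ Finset.range (m+1),
            (Rpoly m p).eval ((1+w)⁻¹) * Z3^[p] g w) :=
        Filter.eventuallyEq_of_mem (isOpen_Ioi.mem_nhds hz) ih
      have hBd : ∀ p, HasDerivAt (Z3^[p] g) (d p) z :=
        fun p => (((Z3_iter_contDiffOn hg p).contDiffAt
          (isOpen_Ioi.mem_nhds hz)).differentiableAt (by simp)).hasDerivAt
      have hterm : ∀ p, HasDerivAt
          (fun w => (Rpoly m p).eval ((1+w)⁻¹) * Z3^[p] g w)
          (A' p * (-1/(1+z)^2) * B p + A p * d p) z :=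
        fun p => (hasDerivAt_eval_inv_one_add (Rpoly m p) hz').mul (hBd p)
      have hsum : HasDerivAt
          (fun w => ∑ p ∈ Finset.range (m+1),
            (Rpoly m p).eval ((1+w)⁻¹) * Z3^[p] g w)
          (∑ p ∈ Finset.range (m+1), (A' p * (-1/(1+z)^2) * B p + A p * d p)) z :=
        HasDerivAt.fun_sum (fun p _ => hterm p)
      have hG : HasDerivAt
          (fun w => phi w * ∑ p ∈ Finset.range (m+1),
            (Rpoly m p).eval ((1+w)⁻¹) * Z3^[p] g w)
          (((1+z)^2)⁻¹ * (∑ p ∈ Finset.range (m+1), A p * B p)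
            + phi z * ∑ p ∈ Finset.range (m+1), (A' p * (-1/(1+z)^2) * B p + A p * d p)) z :=
        (hasDerivAt_phi hz').mul hsum
      have hderiv : deriv (Z3^[m] (fun w => phi w * g w)) z
          = ((1+z)^2)⁻¹ * (∑ p ∈ Finset.range (m+1), A p * B p)
            + phi z * ∑ p ∈ Finset.range (m+1), (A' p * (-1/(1+z)^2) * B p + A p * d p) := by
        rw [hev.deriv_eq, hG.deriv]
      show phi z * deriv (Z3^[m] (fun w => phi w * g w)) z = _
      rw [hderiv]
      -- replace analytic quantities by u
      have hphiz : phi z = 1 - u := phi_eq_one_sub hz'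
      have hsq : ((1+z)^2)⁻¹ = u^2 := by rw [hu, inv_pow]
      have hneg : (-1/(1+z)^2 : ℝ) = -(u^2) := by
        rw [hu, inv_pow]; ring
      -- B (p+1) = (1-u) * d p
      have hBsucc : ∀ p, B (p+1) = (1 - u) * d p := by
        intro p
        show Z3^[p+1] g z = _
        rw [Function.iterate_succ_apply']
        show phi z * deriv (Z3^[p] g) z = _
        rw [hphiz]
      -- eval of Rpoly (m+1)
      have hRval : ∀ p, (Rpoly (m+1) p).eval u
          = u^2 * A p - u^2*(1-u) * A' p
            + (match p with | 0 => 0 | (q+1) => A q) := by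
        intro p
        match p with
        | 0 => simp [Rpoly, hA, hA']
        | (q+1) => simp [Rpoly, hA, hA']
      have hAtop : A (m+1) = 0 := by
        rw [hA]; simp [Rpoly_zero_of_lt m (m+1) (by omega)]
      have hA'top : A' (m+1) = 0 := by
        rw [hA']; simp [Rpoly_zero_of_lt m (m+1) (by omega)]
      rw [hphiz, hsq, hneg]
      congr 1
      have e2 : (1 - u) * ∑ p ∈ Finset.range (m+1), (A' p * -u ^ 2 * B p + A p * d p)
          = ∑ p ∈ Finset.range (m+1), ((1-u) * (A' p * -u^2 * B p) + A p * B (p+1)) := by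
        rw [Finset.mul_sum]
        exact Finset.sum_congr rfl (fun p _ => by rw [hBsucc p]; ring)
      have e3 : ∑ p ∈ Finset.range (m+2), (Rpoly (m+1) p).eval u * B p
          = ∑ p ∈ Finset.range (m+1),
              ((u^2 * A p - u^2*(1-u) * A' p) * B p + A p * B (p+1)) := by
        calc ∑ p ∈ Finset.range (m+2), (Rpoly (m+1) p).eval u * B p
            = ∑ p ∈ Finset.range (m+2), ((u^2 * A p - u^2*(1-u) * A' p) * B p
                + (match p with | 0 => 0 | (q+1) => A q) * B p) :=
              Finset.sum_congr rfl (fun p _ => by rw [hRval p]; ring)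
          _ = ∑ p ∈ Finset.range (m+2), (u^2 * A p - u^2*(1-u) * A' p) * B p
              + ∑ p ∈ Finset.range (m+2),
                  (match p with | 0 => 0 | (q+1) => A q) * B p :=
              Finset.sum_add_distrib
          _ = ∑ p ∈ Finset.range (m+1), (u^2 * A p - u^2*(1-u) * A' p) * B p
              + ∑ p ∈ Finset.range (m+1), A p * B (p+1) := by
              congr 1
              · rw [Finset.sum_range_succ, hAtop, hA'top]; simp
              · rw [Finset.sum_range_succ']; simp
          _ = _ := by rw [← Finset.sum_add_distrib]
      rw [e2, show (m+1+1) = (m+2) from rfl, e3, Finset.mul_sum, ← Finset.sum_add_distrib]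
      exact Finset.sum_congr rfl (fun p _ => by ring)

lemma contDiff_polyeval (p : Polynomial ℝ) : ContDiff ℝ (⊤ : ℕ∞) (fun x : ℝ => p.eval x) := by
  induction p using Polynomial.induction_on' with
  | add p q hp hq => simpa [Polynomial.eval_add] using hp.add hq
  | monomial n a =>
      simpa [Polynomial.eval_monomial] using contDiff_const.mul (contDiff_id.pow n)

/-- For every m there is a family of smooth bounded functions (σ_p)_{0≤p≤m} on [0,∞) such
that for every smooth f on (0,∞), [Z₃^m, φ⁻¹]f = Σ_{p≤m} σ_p(z) Z₃^p(φ⁻¹ f). -/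
theorem stmt6 (m : ℕ) :
    ∃ σ : ℕ → ℝ → ℝ,
      (∀ p ≤ m, ContDiffOn ℝ (⊤ : ℕ∞) (σ p) (Ici 0) ∧ ∃ C : ℝ, ∀ z ∈ Ici (0:ℝ), |σ p z| ≤ C) ∧
      ∀ f : ℝ → ℝ, ContDiffOn ℝ (⊤ : ℕ∞) f (Ioi 0) → ∀ z : ℝ, 0 < z →
        Z3^[m] (fun w => f w / phi w) z - (phi z)⁻¹ * Z3^[m] f z
          = ∑ p ∈ Finset.range (m + 1), σ p z * Z3^[p] (fun w => f w / phi w) z := by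
  refine ⟨fun p z => (if p = m then (1:ℝ) else 0) - (Rpoly m p).eval ((1+z)⁻¹), ?_, ?_⟩
  · intro p _
    constructor
    · apply ContDiffOn.sub contDiffOn_const
      have h1 : ContDiffOn ℝ (⊤ : ℕ∞) (fun z : ℝ => (1+z)⁻¹) (Ici 0) :=
        (contDiffOn_const.add contDiffOn_id).inv
          (fun x hx => by have : (0:ℝ) ≤ x := hx; positivity)
      exact (contDiff_polyeval (Rpoly m p)).comp_contDiffOn h1
    · obtain ⟨C, hC⟩ := (isCompact_Icc (a:=(0:ℝ)) (b:=1)).exists_bound_of_continuousOn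
        (f := fun x : ℝ => (Rpoly m p).eval x) ((Rpoly m p).continuous).continuousOn
      refine ⟨1 + C, fun z hz => ?_⟩
      have hz0 : (0:ℝ) ≤ z := hz
      have hmem : (1+z)⁻¹ ∈ Icc (0:ℝ) 1 :=
        ⟨by positivity, inv_le_one_of_one_le₀ (by linarith)⟩
      calc |(if p = m then (1:ℝ) else 0) - (Rpoly m p).eval ((1+z)⁻¹)|
          ≤ |(if p = m then (1:ℝ) else 0)| + |(Rpoly m p).eval ((1+z)⁻¹)| := abs_sub _ _
        _ ≤ 1 + C := by
            gcongr
            · split_ifs <;> simp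
            · have := hC _ hmem
              rwa [Real.norm_eq_abs] at this
  · intro f hf z hz
    have hz' : z ∈ Ioi (0:ℝ) := hz
    set g : ℝ → ℝ := fun w => f w / phi w with hgdef
    have hg : ContDiffOn ℝ (⊤ : ℕ∞) g (Ioi 0) :=
      hf.div contDiffOn_phi (fun x hx => (phi_pos hx).ne')
    have hfg : ∀ w ∈ Ioi (0:ℝ), f w = phi w * g w := by
      intro w hw
      show f w = phi w * (f w / phi w)
      rw [mul_comm, div_mul_cancel₀ _ (phi_pos hw).ne']
    have h1 : Z3^[m] f z = Z3^[m] (fun w => phi w * g w) z :=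
      Z3_iter_congr hfg m z hz'
    have h2 := main_identity hg m z hz'
    rw [h1, h2, inv_mul_cancel_left₀ (phi_pos hz).ne']
    have h3 : ∑ p ∈ Finset.range (m + 1),
        ((if p = m then (1:ℝ) else 0) - (Rpoly m p).eval ((1+z)⁻¹)) * Z3^[p] g z
        = ∑ p ∈ Finset.range (m + 1), (if p = m then (1:ℝ) else 0) * Z3^[p] g z
          - ∑ p ∈ Finset.range (m + 1), (Rpoly m p).eval ((1+z)⁻¹) * Z3^[p] g z := by
      rw [← Finset.sum_sub_distrib]
      exact Finset.sum_congr rfl (fun p _ => by ring)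
    rw [h3]
    congr 1
    simp [ite_mul]
end
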